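/- Let T be the 10×10 real symmetric matrix whose rows and columns are indexed by the 2-element subsets of {1,2,3,4,5}, with entries T(s,s) = -4, T(s,t) = 7/2 if s and t share exactly one element, and T(s,t) = -9 if s and t are disjoint. Then det T = 3001250000000 (i.e. det T = (-10)·(-20)^5·(35/2)^4). -/

import Mathlib

/-- The 10×10 real symmetric matrix indexed by 2-element subsets of {1,…,5},
with `-4` on the diagonal, `7/2` when the two subsets share exactly one element,
and `-9` when they are disjoint. -/
noncomputable def HessianMatrix :
    Matrix {s : Finset (Fin 5) // s.card = 2} {s : Finset (Fin 5) // s.card = 2} ℝ :=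
  fun s t =>
    if (s.1 ∩ t.1).card = 2 then -4
    else if (s.1 ∩ t.1).card = 1 then 7/2
    else -9

/-!
Let `B` be the 10 × 5 incidence matrix between the edges and the vertices of `K₅` and `J` the
all-ones matrix. Since `(B (c I + d J) Bᵀ)(s, t) = c |s ∩ t| + 4 d`, the matrix is
`T = -20 I + B C Bᵀ` with `C = 25/2 I - 9/4 J`. The Weinstein–Aronszajn identity gives
`det T = (-20)⁵ det (-20 I + C BᵀB)`, and `BᵀB = 3 I + J` because every vertex lies on four edges
and two distinct vertices on one. So everything happens in the algebra spanned by
`I` and `J`: `-20 I + C BᵀB = 35/2 I - 11/2 J`, whose eigenvalues are `35/2` (four times) and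
`35/2 - 5 · 11/2 = -10`, while the other five eigenvalues of `T` equal `-20`.
-/

open Matrix Finset

section AllOnes

variable (n R : Type*) [Fintype n]

def allOnes [One R] : Matrix n n R := of fun _ _ => 1

variable {n R}

theorem allOnes_mul_allOnes [NonAssocSemiring R] :
    allOnes n R * allOnes n R = (Fintype.card n : R) • allOnes n R := by
  ext; simp [allOnes, mul_apply]

theorem smul_one_add_smul_allOnes_mul [CommSemiring R] [DecidableEq n] (a b c d : R) :
    (a • 1 + b • allOnes n R) * (c • 1 + d • allOnes n R) =
      (a * c) • 1 + (a * d + b * c + Fintype.card n * b * d) • allOnes n R := by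
  simp only [Matrix.add_mul, Matrix.mul_add, smul_mul_smul, Matrix.one_mul, Matrix.mul_one,
    allOnes_mul_allOnes, smul_smul]
  module

theorem det_smul_one_add_smul_allOnes [Field R] [DecidableEq n] [Nonempty n] {a : R}
    (ha : a ≠ 0) (b : R) :
    det (a • 1 + b • allOnes n R) = a ^ (Fintype.card n - 1) * (a + Fintype.card n * b) := by
  have hvec : a • 1 + b • allOnes n R = a • (1 + vecMulVec ((b / a) • 1) 1) := by
    ext i j
    by_cases h : i = j <;> simp [allOnes, one_apply, h, mul_add, mul_div_cancel₀ _ ha]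
  obtain ⟨k, hk⟩ := Nat.exists_eq_succ_of_ne_zero (Fintype.card_ne_zero (α := n))
  rw [hvec, det_smul, vecMulVec_eq Unit, det_one_add_replicateCol_mul_replicateRow]
  simp only [dotProduct, Pi.smul_apply, Pi.one_apply, smul_eq_mul, mul_one, sum_const, card_univ,
    nsmul_eq_mul, hk, pow_succ, Nat.succ_sub_one]
  field_simp

end AllOnes

theorem det_smul_one_add_mul_comm {m n K : Type*} [Fintype m] [Fintype n] [DecidableEq m]
    [DecidableEq n] [Field K] {c : K} (hc : c ≠ 0) (U : Matrix m n K) (V : Matrix n m K) :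
    det (c • 1 + U * V) = c ^ Fintype.card m / c ^ Fintype.card n * det (c • 1 + V * U) := by
  have hUV : c • 1 + U * V = c • (1 + U * (c⁻¹ • V)) := by
    rw [smul_add, Matrix.mul_smul, smul_smul, mul_inv_cancel₀ hc, one_smul]
  have hVU : c • 1 + V * U = c • (1 + c⁻¹ • V * U) := by
    rw [smul_add, Matrix.smul_mul, smul_smul, mul_inv_cancel₀ hc, one_smul]
  rw [hUV, hVU, det_smul, det_smul, det_one_add_mul_comm]
  field_simp

section Incidence

variable {ι α : Type*} [DecidableEq α]

def incidenceMatrix (R : Type*) [Zero R] [One R] (S : ι → Finset α) : Matrix ι α R :=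
  of fun i a => if a ∈ S i then 1 else 0

variable {R : Type*} [CommSemiring R] (S : ι → Finset α)

theorem incidenceMatrix_mul_transpose_apply [Fintype α] (i j : ι) :
    (incidenceMatrix R S * (incidenceMatrix R S)ᵀ : Matrix ι ι R) i j = #(S i ∩ S j) := by
  simp [incidenceMatrix, mul_apply, ← ite_and, ← Finset.mem_inter, Finset.inter_comm]

theorem incidenceMatrix_mul_allOnes_mul_transpose_apply [Fintype α] (i j : ι) :
    (incidenceMatrix R S * allOnes α R * (incidenceMatrix R S)ᵀ : Matrix ι ι R) i j =
      #(S i) * #(S j) := by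
  simp [incidenceMatrix, allOnes, mul_apply, mul_comm]

theorem transpose_incidenceMatrix_mul_apply [Fintype ι] (a b : α) :
    ((incidenceMatrix R S)ᵀ * incidenceMatrix R S : Matrix α α R) a b =
      #{i | a ∈ S i ∧ b ∈ S i} := by
  simp [incidenceMatrix, mul_apply, ← ite_and, and_comm]

end Incidence

theorem card_pairs_containing (a b : Fin 5) :
    #{s : {s : Finset (Fin 5) // s.card = 2} | a ∈ s.1 ∧ b ∈ s.1} = if a = b then 4 else 1 := by
  revert a b; decide

-- The index type must be given explicitly: left as a metavariable, `*` picks up the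
-- `CStarMatrix` multiplication instance, which `rw` then cannot see through.
local notation "𝓑" =>
  incidenceMatrix ℝ (Subtype.val : {s : Finset (Fin 5) // Finset.card s = 2} → Finset (Fin 5))

theorem hessianMatrix_eq_smul_one_add_incidenceMatrix_mul :
    HessianMatrix =
      (-20 : ℝ) • 1 + 𝓑 * ((25 / 2 : ℝ) • 1 + (-9 / 4 : ℝ) • allOnes (Fin 5) ℝ) * 𝓑ᵀ := by
  ext s t
  have hst : #(s.1 ∩ t.1) ≤ 2 := (card_le_card inter_subset_left).trans s.2.le
  have hdiag : s = t ↔ #(s.1 ∩ t.1) = 2 := by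
    refine ⟨by rintro rfl; simpa using s.2, fun h ↦ Subtype.ext ?_⟩
    exact (eq_of_subset_of_card_le inter_subset_left (by rw [h, s.2])).symm.trans
      (eq_of_subset_of_card_le inter_subset_right (by rw [h, t.2]))
  simp only [Matrix.mul_add, Matrix.add_mul, Matrix.mul_smul, Matrix.smul_mul, Matrix.mul_one,
    Matrix.add_apply, Matrix.smul_apply, incidenceMatrix_mul_transpose_apply,
    incidenceMatrix_mul_allOnes_mul_transpose_apply, s.2, t.2, one_apply, hdiag, HessianMatrix]
  interval_cases #(s.1 ∩ t.1) <;> norm_num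

theorem transpose_incidenceMatrix_mul_incidenceMatrix_pairs :
    𝓑ᵀ * 𝓑 = (3 : ℝ) • 1 + (1 : ℝ) • allOnes (Fin 5) ℝ := by
  ext a b
  rw [transpose_incidenceMatrix_mul_apply, card_pairs_containing]
  by_cases h : a = b <;> norm_num [h, allOnes, one_apply]

theorem det_hessianMatrix :
    HessianMatrix.det = 3001250000000 ∧
    HessianMatrix.det = (-10) * (-20) ^ 5 * (35/2) ^ 4 := by
  have h : HessianMatrix.det = (-10) * (-20) ^ 5 * (35/2) ^ 4 := by
    rw [hessianMatrix_eq_smul_one_add_incidenceMatrix_mul, Matrix.mul_assoc,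
      det_smul_one_add_mul_comm (by norm_num), Matrix.mul_assoc,
      transpose_incidenceMatrix_mul_incidenceMatrix_pairs, smul_one_add_smul_allOnes_mul,
      ← add_assoc, ← add_smul, det_smul_one_add_smul_allOnes (by norm_num)]
    norm_num [Fintype.card_finset_len, Nat.choose]
  exact ⟨by rw [h]; norm_num, h⟩
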